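/- Let L/K be a finite Galois extension with Galois group G, V a finite-dimensional L-vector space, and T a family of commuting diagonalizable L-linear operators on V. If v ∈ V is a common eigenvector with eigenvalues (a_T), then for every σ ∈ G there exists a nonzero common eigenvector v_σ of the operators T (viewed as K-linear operators on V regarded as a K-vector space, base-changed to L) with eigenvalues (σ(a_T)). -/

import Mathlib

/-!
The kernel of the multiplication map `L ⊗[K] L → L, x ⊗ y ↦ x * σ y` is a proper ideal of the
finite-dimensional, hence Artinian, `L`-algebra `L ⊗[K] L`. In an Artinian ring every non-unit
is a zero divisor, so this ideal is annihilated by some `e ≠ 0`, i.e. `(1 ⊗ b) * e = σ b • e`.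
Along the injective map `L ⊗[K] L → L ⊗[K] V` induced by `y ↦ y • v`, each base-changed `T`
acts on the image as multiplication by `1 ⊗ a_T`, so the image of `e` is the required vector.
-/

open TensorProduct

theorem IsArtinianRing.exists_ne_zero_forall_mem_mul_eq_zero {R : Type*} [CommRing R]
    [IsArtinianRing R] {I : Ideal R} (hI : I ≠ ⊤) : ∃ e : R, e ≠ 0 ∧ ∀ x ∈ I, x * e = 0 := by
  have hdisj : Disjoint (I : Set R) (nonZeroDivisors R) := Set.disjoint_left.mpr
    fun x hxI hx ↦ hI (I.eq_top_of_isUnit_mem hxI (isUnit_of_mem_nonZeroDivisors hx))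
  obtain ⟨e, he, hne⟩ :=
    SetLike.exists_of_lt (Ideal.bot_lt_annihilator_of_disjoint_nonZeroDivisors hdisj)
  refine ⟨e, hne, fun x hx ↦ ?_⟩
  simpa [mul_comm] using Submodule.mem_annihilator.mp he x hx

theorem Algebra.TensorProduct.exists_ne_zero_forall_one_tmul_mul_eq_smul
    {K L L' : Type*} [CommRing K] [CommRing L] [CommRing L'] [Algebra K L] [Algebra K L']
    [Module.Finite K L] [IsArtinianRing L'] [Nontrivial L'] (σ : L →ₐ[K] L') :
    ∃ e : L' ⊗[K] L, e ≠ 0 ∧ ∀ b, (1 ⊗ₜ b) * e = σ b • e := by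
  have : IsArtinianRing (L' ⊗[K] L) := IsArtinianRing.of_finite L' _
  let μ : L' ⊗[K] L →ₐ[L'] L' := lift (AlgHom.id L' L') σ fun _ _ ↦ Commute.all _ _
  obtain ⟨e, hne, he⟩ :=
    IsArtinianRing.exists_ne_zero_forall_mem_mul_eq_zero (RingHom.ker_ne_top μ)
  refine ⟨e, hne, fun b ↦ sub_eq_zero.mp ?_⟩
  rw [Algebra.smul_def, algebraMap_apply, Algebra.algebraMap_self, RingHom.id_apply, ← sub_mul]
  exact he _ (by simp [μ])

theorem LinearMap.baseChange_restrictScalars_baseChange_toSpanSingleton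
    {K A V : Type*} [CommRing K] [CommRing A] [Algebra K A] [AddCommGroup V] [Module K V]
    [Module A V] [IsScalarTower K A V] (T : V →ₗ[A] V) {v : V} {c : A} (hv : T v = c • v)
    (x : A ⊗[K] A) :
    (T.restrictScalars K).baseChange A (((toSpanSingleton A V v).restrictScalars K).baseChange A x)
      = ((toSpanSingleton A V v).restrictScalars K).baseChange A ((1 ⊗ₜ c) * x) := by
  induction x using TensorProduct.induction_on with
  | zero => simp
  | tmul x y => simp [hv, smul_smul, mul_comm]
  | add x y hx hy => simp only [map_add, mul_add, hx, hy]

theorem galois_conjugate_eigenvector_general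
    (K L : Type*) [Field K] [Field L] [Algebra K L]
    [FiniteDimensional K L]
    (V : Type*) [AddCommGroup V] [Module K V] [Module L V] [IsScalarTower K L V]
    (ι : Type*) (T : ι → (V →ₗ[L] V))
    (v : V) (hv : v ≠ 0) (a : ι → L) (hev : ∀ i, T i v = a i • v)
    (σ : L ≃ₐ[K] L) :
    ∃ w : L ⊗[K] V, w ≠ 0 ∧
      ∀ i, LinearMap.baseChange L ((T i).restrictScalars K) w = σ (a i) • w := by
  obtain ⟨e, he0, he⟩ :=
    Algebra.TensorProduct.exists_ne_zero_forall_one_tmul_mul_eq_smul (σ : L →ₐ[K] L)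
  set φ : L →ₗ[K] V := (LinearMap.toSpanSingleton L V v).restrictScalars K
  have hφ : Function.Injective (φ.baseChange L) := by
    rw [LinearMap.baseChange_eq_ltensor]
    exact Module.Flat.lTensor_preserves_injective_linearMap φ (smul_left_injective L hv)
  refine ⟨φ.baseChange L e, (map_ne_zero_iff _ hφ).mpr he0, fun i ↦ ?_⟩
  rw [LinearMap.baseChange_restrictScalars_baseChange_toSpanSingleton _ (hev i), he, map_smul,
    AlgEquiv.coe_toAlgHom]

/-- Let `L/K` be a finite Galois extension with Galois group `G`, `V` a
finite-dimensional `L`-vector space and `T` a family of commuting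
diagonalizable `L`-linear operators on `V`.  If `v` is a nonzero common
eigenvector with eigenvalues `a T`, then for every `σ ∈ G` there is a nonzero
common eigenvector of the operators `T` — viewed as `K`-linear operators on
`V` and base-changed to `L ⊗_K V` — with eigenvalues `σ (a T)`. -/
theorem galois_conjugate_eigenvector
    (K L : Type*) [Field K] [Field L] [Algebra K L]
    [FiniteDimensional K L] [IsGalois K L]
    (V : Type*) [AddCommGroup V] [Module K V] [Module L V] [IsScalarTower K L V] [FiniteDimensional L V]
    (ι : Type*) (T : ι → (V →ₗ[L] V))
    (hcomm : ∀ i j, Commute (T i) (T j))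
    (hdiag : ∀ i, ⨆ μ : L, Module.End.eigenspace (T i) μ = ⊤)
    (v : V) (hv : v ≠ 0) (a : ι → L) (hev : ∀ i, T i v = a i • v)
    (σ : L ≃ₐ[K] L) :
    ∃ w : L ⊗[K] V, w ≠ 0 ∧
      ∀ i, LinearMap.baseChange L ((T i).restrictScalars K) w = σ (a i) • w :=
  galois_conjugate_eigenvector_general K L V ι T v hv a hev σ
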